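/- Let K be a complete discrete valuation field of characteristic (0,p) containing a primitive p^n-th root of unity, with residue field κ. Let a, b ∈ K^× with v_K(a) = v_K(b) = 0, and suppose K(a^{1/p^n}) = K(b^{1/p^n}) is a degree-p^n field extension of K. If the image of a in κ is a p-th power in κ, then the image of b in κ is also a p-th power in κ. -/

import Mathlib

/-!
Since `K` contains the `p^n`-th roots of unity, `L = K(α)` is a cyclic Kummer extension, and a
generator `σ` of its Galois group acts by `σ α = ζ α`.  As `β^(p^n) ∈ K`, also `σ β = ζ^r β` for
some `r`, so `β / α^r` is Galois-invariant: `β = c α^r` with `c ∈ K`, i.e. `b = c^(p^n) a^r`.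
Since `a` is a unit, `c^(p^n)` lies in the integrally closed ring `A`, hence so does `c`. Reducing,
`b̄ = (ā)^r (c̄^(p^(n-1)))^p` is a `p`-th power whenever `ā` is.
-/

open IsLocalRing IntermediateField Module

section Kummer

variable {K L : Type*} [Field K] [Field L] [Algebra K L] {m : ℕ} [NeZero m] {ζ : K}
  {a b : K} {α β : L}

theorem AlgEquiv.exists_apply_eq_pow_mul_of_pow_eq_algebraMap (σ : L ≃ₐ[K] L)
    (hζ : IsPrimitiveRoot ζ m) (hb : b ≠ 0) (hβ : β ^ m = algebraMap K L b) :
    ∃ r : ℕ, σ β = algebraMap K L ζ ^ r * β := by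
  have hbL : algebraMap K L b ≠ 0 := (map_ne_zero _).2 hb
  have hβ0 : β ≠ 0 := by rintro rfl; exact hbL (by rw [← hβ, zero_pow (NeZero.ne m)])
  have hunity : (σ β / β) ^ m = 1 := by
    rw [div_pow, ← map_pow, hβ, AlgEquiv.commutes, div_self hbL]
  obtain ⟨r, -, hr⟩ := (hζ.map_of_injective (algebraMap K L).injective).eq_pow_of_pow_eq_one hunity
  exact ⟨r, by rw [hr, div_mul_cancel₀ _ hβ0]⟩

theorem exists_eq_algebraMap_mul_pow_of_pow_eq (hζ : IsPrimitiveRoot ζ m) (ha : a ≠ 0)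
    (hb : b ≠ 0) (hα : α ^ m = algebraMap K L a) (hgen : K⟮α⟯ = ⊤) (hdeg : finrank K L = m)
    (hβ : β ^ m = algebraMap K L b) :
    ∃ (r : ℕ) (c : K), β = algebraMap K L c * α ^ r := by
  subst hdeg
  have : FiniteDimensional K L := Module.finite_of_finrank_pos (NeZero.pos _)
  have hroots : (primitiveRoots (finrank K L) K).Nonempty :=
    ⟨ζ, (mem_primitiveRoots (NeZero.pos _)).2 hζ⟩
  have H := irreducible_X_pow_sub_C_of_root_adjoin_eq_top hα hgen
  have := isSplittingField_X_pow_sub_C_of_root_adjoin_eq_top hroots hα hgen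
  have := isGalois_of_isSplittingField_X_pow_sub_C hroots H L
  set e := autEquivZmod H L hζ
  set σ := e.symm (Multiplicative.ofAdd 1) with hσ
  have hσα : σ α = algebraMap K L ζ * α := by
    simpa [Algebra.smul_def] using autEquivZmod_symm_apply_natCast H L hα hζ 1
  have hpowers (τ : L ≃ₐ[K] L) : ∃ k : ℕ, τ = σ ^ k :=
    ⟨(e τ).toAdd.val, by
      rw [hσ, ← map_pow, ← ofAdd_nsmul, nsmul_one, ZMod.natCast_zmod_val, ofAdd_toAdd,
        e.symm_apply_apply]⟩
  obtain ⟨r, hσβ⟩ := σ.exists_apply_eq_pow_mul_of_pow_eq_algebraMap hζ hb hβ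
  have hζr : algebraMap K L ζ ^ r ≠ 0 :=
    pow_ne_zero _ ((map_ne_zero _).2 (hζ.ne_zero (NeZero.ne _)))
  have hσγ : σ • (β / α ^ r) = β / α ^ r := by
    rw [AlgEquiv.smul_def, map_div₀, map_pow, hσα, hσβ, mul_pow, mul_div_mul_left _ _ hζr]
  obtain ⟨c, hc⟩ : β / α ^ r ∈ Set.range (algebraMap K L) := by
    refine (IsGalois.mem_range_algebraMap_iff_fixed _).2 fun τ ↦ ?_
    obtain ⟨k, rfl⟩ := hpowers τ
    exact (MulAction.stabilizer _ (β / α ^ r)).pow_mem hσγ k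
  have hα0 : α ≠ 0 := by
    rintro rfl
    exact ha ((map_eq_zero _).1 (by rw [← hα, zero_pow (NeZero.ne _)]))
  exact ⟨r, c, by rw [hc, div_mul_cancel₀ _ (pow_ne_zero _ hα0)]⟩

theorem exists_eq_pow_mul_pow_of_pow_eq (hζ : IsPrimitiveRoot ζ m) (ha : a ≠ 0) (hb : b ≠ 0)
    (hα : α ^ m = algebraMap K L a) (hgen : K⟮α⟯ = ⊤) (hdeg : finrank K L = m)
    (hβ : β ^ m = algebraMap K L b) :
    ∃ (r : ℕ) (c : K), b = c ^ m * a ^ r := by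
  obtain ⟨r, c, hβc⟩ := exists_eq_algebraMap_mul_pow_of_pow_eq hζ ha hb hα hgen hdeg hβ
  refine ⟨r, c, (algebraMap K L).injective ?_⟩
  rw [← hβ, hβc, mul_pow, ← pow_right_comm, hα, map_mul, map_pow, map_pow]

end Kummer

theorem IsIntegrallyClosed.exists_eq_pow_mul_pow_of_isUnit {A K : Type*} [CommRing A]
    [IsIntegrallyClosed A] [Field K] [Algebra A K] [IsFractionRing A K] {a b : A}
    (ha : IsUnit a) {m r : ℕ} (hm : m ≠ 0) {c : K}
    (h : algebraMap A K b = c ^ m * algebraMap A K a ^ r) :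
    ∃ c₀ : A, b = c₀ ^ m * a ^ r := by
  obtain ⟨u, rfl⟩ := ha
  have hcm : c ^ m = algebraMap A K (b * ↑u⁻¹ ^ r) := by
    rw [map_mul, map_pow, h, mul_assoc, ← mul_pow, ← map_mul, Units.mul_inv, map_one, one_pow,
      mul_one]
  obtain ⟨c₀, rfl⟩ := exists_algebraMap_eq_of_isIntegral_pow (R := A) (Nat.pos_of_ne_zero hm)
    (hcm ▸ isIntegral_algebraMap)
  exact ⟨c₀, IsFractionRing.injective A K (by rw [h, map_mul, map_pow, map_pow])⟩

theorem stmt4_general (p : ℕ) (hp : p.Prime) (n : ℕ) (hn : 1 ≤ n)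
    (A : Type*) [CommRing A] [IsDomain A] [IsDiscreteValuationRing A]
    (K : Type*) [Field K] [Algebra A K] [IsFractionRing A K]
    (ζ : K) (hζ : IsPrimitiveRoot ζ (p ^ n))
    -- `a, b ∈ K^×` with `v_K(a) = v_K(b) = 0`, i.e. units of `A`
    (a b : A) (ha : IsUnit a) (hb : IsUnit b)
    -- `L = K(a^{1/p^n}) = K(b^{1/p^n})`, of degree `p^n` over `K`
    (L : Type*) [Field L] [Algebra K L]
    (α β : L)
    (hα : α ^ (p ^ n) = algebraMap K L (algebraMap A K a))
    (hβ : β ^ (p ^ n) = algebraMap K L (algebraMap A K b))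
    (hgenα : Algebra.adjoin K ({α} : Set L) = ⊤)
    (hdeg : Module.finrank K L = p ^ n)
    -- the image of `a` in the residue field is a `p`-th power
    (hared : ∃ x : ResidueField A, x ^ p = residue A a) :
    ∃ y : ResidueField A, y ^ p = residue A b := by
  have : NeZero (p ^ n) := ⟨pow_ne_zero n hp.ne_zero⟩
  have hinj := IsFractionRing.injective A K
  obtain ⟨r, c, hbc⟩ := exists_eq_pow_mul_pow_of_pow_eq hζ
    ((map_ne_zero_iff _ hinj).2 ha.ne_zero) ((map_ne_zero_iff _ hinj).2 hb.ne_zero) hα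
    (adjoin_eq_top_of_algebra _ _ hgenα) hdeg hβ
  obtain ⟨c₀, rfl⟩ := IsIntegrallyClosed.exists_eq_pow_mul_pow_of_isUnit ha (NeZero.ne _) hbc
  obtain ⟨x, hx⟩ := hared
  refine ⟨residue A c₀ ^ p ^ (n - 1) * x ^ r, ?_⟩
  rw [mul_pow, ← pow_mul, ← pow_succ, Nat.sub_add_cancel hn, pow_right_comm, hx, map_mul,
    map_pow, map_pow]

/-- let `K = Frac(A)` be a complete discrete valuation field of characteristic
`(0, p)` containing a primitive `p^n`-th root of unity, with residue field `κ`.  Let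
`a, b ∈ K^×` with `v_K(a) = v_K(b) = 0` (i.e. `a, b` are units of the valuation ring `A`),
and suppose `K(a^{1/p^n}) = K(b^{1/p^n})` is a degree-`p^n` field extension of `K`.  If the
image of `a` in `κ` is a `p`-th power, then so is the image of `b`. -/
theorem stmt4 (p : ℕ) (hp : p.Prime) (n : ℕ) (hn : 1 ≤ n)
    (A : Type*) [CommRing A] [IsDomain A] [IsDiscreteValuationRing A]
    [IsAdicComplete (maximalIdeal A) A]
    (K : Type*) [Field K] [Algebra A K] [IsFractionRing A K] [CharZero K]
    (hres : CharP (ResidueField A) p)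
    (ζ : K) (hζ : IsPrimitiveRoot ζ (p ^ n))
    -- `a, b ∈ K^×` with `v_K(a) = v_K(b) = 0`, i.e. units of `A`
    (a b : A) (ha : IsUnit a) (hb : IsUnit b)
    -- `L = K(a^{1/p^n}) = K(b^{1/p^n})`, of degree `p^n` over `K`
    (L : Type*) [Field L] [Algebra K L]
    (α β : L)
    (hα : α ^ (p ^ n) = algebraMap K L (algebraMap A K a))
    (hβ : β ^ (p ^ n) = algebraMap K L (algebraMap A K b))
    (hgenα : Algebra.adjoin K ({α} : Set L) = ⊤)
    (hgenβ : Algebra.adjoin K ({β} : Set L) = ⊤)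
    (hdeg : Module.finrank K L = p ^ n)
    -- the image of `a` in the residue field is a `p`-th power
    (hared : ∃ x : ResidueField A, x ^ p = residue A a) :
    ∃ y : ResidueField A, y ^ p = residue A b :=
  stmt4_general p hp n hn A K ζ hζ a b ha hb L α β hα hβ hgenα hdeg hared
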